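/- For 0 < ε < 1/4, the intermediate map V₂₁ between Λ₁ and Λ₂ (Pauli channels with eigenvalues λ_x^{(1)} = λ_z^{(1)} = 1−2ε, λ_y^{(1)} = 1−4ε and λ_x^{(2)} = λ_z^{(2)} = 1−4ε+8ε², λ_y^{(2)} = (1−4ε)²) has Pauli eigenvalues μ_x = μ_z = (1−4ε+8ε²)/(1−2ε) and μ_y = 1−4ε, and the smallest eigenvalue of its Choi matrix is ζ(ε) = (1 − 2μ_x + μ_y)/4 = (1/4)·(1 − 2(1−4ε+8ε²)/(1−2ε) + (1−4ε)), which is strictly negative for all 0 < ε < 1/4. -/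

import Mathlib

open Matrix Complex ComplexOrder

abbrev Mat (d : ℕ) := Matrix (Fin d) (Fin d) ℂ

/-- The extension `I_n ⊗ Λ` of a matrix map `Λ` by the identity on a first tensor factor. -/
def matExt {α β : Type*} [Fintype α] [Fintype β] (n : ℕ)
    (Λ : Matrix α α ℂ → Matrix β β ℂ)
    (A : Matrix (Fin n × α) (Fin n × α) ℂ) :
    Matrix (Fin n × β) (Fin n × β) ℂ :=
  fun p q => Λ (fun k l => A (p.1, k) (q.1, l)) p.2 q.2

/-- The extension `Λ ⊗ I` of a matrix map `Λ` by the identity on a second tensor factor. -/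
def extSecond {α β : Type*} [Fintype α] [Fintype β] (n : ℕ)
    (Λ : Matrix α α ℂ → Matrix β β ℂ)
    (A : Matrix (α × Fin n) (α × Fin n) ℂ) :
    Matrix (β × Fin n) (β × Fin n) ℂ :=
  fun p q => Λ (fun k l => A (k, p.2) (l, q.2)) p.1 q.1

/-- A matrix map is positive if it preserves positive semidefiniteness. -/
def IsPosMap {α β : Type*} [Fintype α] [Fintype β]
    (Λ : Matrix α α ℂ → Matrix β β ℂ) : Prop :=
  ∀ A, A.PosSemidef → (Λ A).PosSemidef

/-- Complete positivity: every identity extension preserves positive semidefiniteness. -/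
def IsCP {α β : Type*} [Fintype α] [Fintype β]
    (Λ : Matrix α α ℂ → Matrix β β ℂ) : Prop :=
  ∀ (n : ℕ) (A : Matrix (Fin n × α) (Fin n × α) ℂ),
    A.PosSemidef → (matExt n Λ A).PosSemidef

/-- Trace preservation. -/
def IsTP {α β : Type*} [Fintype α] [Fintype β]
    (Λ : Matrix α α ℂ → Matrix β β ℂ) : Prop :=
  ∀ A, (Λ A).trace = A.trace

def IsCPTP {α β : Type*} [Fintype α] [Fintype β]
    (Λ : Matrix α α ℂ → Matrix β β ℂ) : Prop :=
  IsCP Λ ∧ IsTP Λ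

/-- The trace norm `‖A‖₁ = Tr √(AᴴA)`. -/
noncomputable def traceNorm {m : Type*} [Fintype m] [DecidableEq m] (A : Matrix m m ℂ) : ℝ :=
  (((Matrix.posSemidef_conjTranspose_mul_self A).isHermitian.eigenvectorUnitary : Matrix m m ℂ) *
    diagonal (((↑) : ℝ → ℂ) ∘ (√·) ∘ (Matrix.posSemidef_conjTranspose_mul_self A).isHermitian.eigenvalues) *
    (star (Matrix.posSemidef_conjTranspose_mul_self A).isHermitian.eigenvectorUnitary :
      Matrix m m ℂ)).trace.re

/-- The `n`-fold tensor power `Λ^{⊗n}` of a linear matrix map. -/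
noncomputable def tensorPow {d : ℕ} (n : ℕ) (Λ : Mat d → Mat d)
    (A : Matrix (Fin n → Fin d) (Fin n → Fin d) ℂ) :
    Matrix (Fin n → Fin d) (Fin n → Fin d) ℂ :=
  fun p q => ∑ i : Fin n → Fin d, ∑ j : Fin n → Fin d,
    A i j * ∏ k, Λ (Matrix.single (i k) (j k) 1) (p k) (q k)

/-- The (normalized) Choi matrix `(I ⊗ Λ)(|φ₊⟩⟨φ₊|)`. -/
noncomputable def choi {d : ℕ} (Λ : Mat d → Mat d) :
    Matrix (Fin d × Fin d) (Fin d × Fin d) ℂ :=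
  fun p q => (1 / (d : ℂ)) * Λ (Matrix.single p.1 q.1 1) p.2 q.2

noncomputable def σX : Mat 2 := !![0, 1; 1, 0]
noncomputable def σY : Mat 2 := !![0, -Complex.I; Complex.I, 0]
noncomputable def σZ : Mat 2 := !![1, 0; 0, -1]

/-- The single-collision channel Λ₁. -/
noncomputable def Lam1 (ε : ℝ) (ρ : Mat 2) : Mat 2 :=
  ((1 - 2*ε : ℝ) : ℂ) • ρ + ((ε : ℝ) : ℂ) • (σZ * ρ * σZ + σX * ρ * σX)

/-- The two-collision channel Λ₂. -/
noncomputable def Lam2 (ε : ℝ) (ρ : Mat 2) : Mat 2 :=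
  (((1 - 2*ε)^2 + 4*ε^2 : ℝ) : ℂ) • ρ +
    ((2*ε*(1 - 2*ε) : ℝ) : ℂ) • (σZ * ρ * σZ + σX * ρ * σX)

/-- A general qubit Pauli map. -/
noncomputable def pauliMap (q0 qx qy qz : ℝ) (ρ : Mat 2) : Mat 2 :=
  (q0 : ℂ) • ρ + (qx : ℂ) • (σX * ρ * σX) + (qy : ℂ) • (σY * ρ * σY) + (qz : ℂ) • (σZ * ρ * σZ)

/-- The qubit state with Bloch vector `(x, y, z)`. -/
noncomputable def bloch (x y z : ℝ) : Mat 2 :=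
  (1/2 : ℂ) • !![1 + (z : ℂ), (x : ℂ) - Complex.I * (y : ℂ);
                 (x : ℂ) + Complex.I * (y : ℂ), 1 - (z : ℂ)]

/-- The coarse-grained state `λ(ρ ⊗ ρ)` of a qubit with Bloch `z`-component `rz`. -/
noncomputable def cg (rz : ℝ) : Mat 2 :=
  !![(((1 + rz)^2 / 4 : ℝ) : ℂ), 0;
     0, (((1 - rz)^2 / 4 + (1 - rz^2) / 2 : ℝ) : ℂ)]

/-!
Λ₁ and Λ₂ are Pauli channels: they are diagonal in the basis `1, σX, σY, σZ`, with eigenvalues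
`1, 1 - 2ε, 1 - 4ε, 1 - 2ε` and `1, 1 - 4ε + 8ε², (1 - 4ε)², 1 - 4ε + 8ε²`. As no eigenvalue of Λ₁
vanishes, `Λ₂ = V ∘ Λ₁` forces `V` to be the unital Pauli-diagonal map whose eigenvalues are the
ratios. The Choi matrix of such a map is `(1 ⊗ 1 + μx σX ⊗ σX - μy σY ⊗ σY + μz σZ ⊗ σZ) / 4`,
which is diagonal in the Bell basis with eigenvalues `(1 ± μx ± μy ± μz) / 4` (an even number of
minus signs). The smallest is the singlet's, `(1 - 2μx + μy) / 4 = -2ε² / (1 - 2ε) < 0`.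
-/

theorem IsLinearMap.apply_eq_div_smul_of_comp {K M N : Type*} [Field K] [AddCommGroup M]
    [Module K M] [AddCommGroup N] [Module K N] {Λ₁ : M → M} {Λ₂ : M → N} {V : M → N}
    (hlin : IsLinearMap K V) (hcomp : ∀ ρ, Λ₂ ρ = V (Λ₁ ρ)) {A : M} {B : N} {c d : K} (hc : c ≠ 0)
    (h₁ : Λ₁ A = c • A) (h₂ : Λ₂ A = d • B) : V A = (d / c) • B := by
  rw [div_eq_inv_mul, mul_smul, ← h₂, hcomp, h₁, hlin.map_smul, inv_smul_smul₀ hc]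

section PauliMap
variable (q0 qx qy qz : ℝ)

theorem pauliMap_one : pauliMap q0 qx qy qz 1 = ((q0 + qx + qy + qz : ℝ) : ℂ) • 1 := by
  ext i j
  fin_cases i <;> fin_cases j <;> simp [pauliMap, σX, σY, σZ, Matrix.one_fin_two]

theorem pauliMap_σX : pauliMap q0 qx qy qz σX = ((q0 + qx - qy - qz : ℝ) : ℂ) • σX := by
  ext i j
  fin_cases i <;> fin_cases j <;> simp [pauliMap, σX, σY, σZ] <;> ring_nf

theorem pauliMap_σY : pauliMap q0 qx qy qz σY = ((q0 - qx + qy - qz : ℝ) : ℂ) • σY := by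
  ext i j
  fin_cases i <;> fin_cases j <;> simp [pauliMap, σX, σY, σZ] <;> ring_nf

theorem pauliMap_σZ : pauliMap q0 qx qy qz σZ = ((q0 - qx - qy + qz : ℝ) : ℂ) • σZ := by
  ext i j
  fin_cases i <;> fin_cases j <;> simp [pauliMap, σX, σY, σZ] <;> ring_nf

end PauliMap

theorem pauli_decomposition (A : Mat 2) :
    A = (1/2 : ℂ) • (A.trace • 1 + (σX * A).trace • σX + (σY * A).trace • σY
      + (σZ * A).trace • σZ) := by
  ext i j
  fin_cases i <;> fin_cases j <;>
    simp [σX, σY, σZ, Matrix.trace_fin_two, Matrix.vecMul, dotProduct, Fin.sum_univ_two] <;>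
    ring_nf <;> simp only [Complex.I_sq] <;> ring

-- `(σ ⊗ 1) Ω = (1 ⊗ σᵀ) Ω` for the maximally entangled `Ω`, and `σYᵀ = -σY`:
-- hence the sign of `σY ⊗ σY`.
open Kronecker in
noncomputable def pauliChoi (μx μy μz : ℂ) : Matrix (Fin 2 × Fin 2) (Fin 2 × Fin 2) ℂ :=
  (1/4 : ℂ) • (1 ⊗ₖ 1 + μx • σX ⊗ₖ σX - μy • σY ⊗ₖ σY + μz • σZ ⊗ₖ σZ)

theorem IsLinearMap.apply_eq_of_pauli {V : Mat 2 → Mat 2} (hV : IsLinearMap ℂ V) {μx μy μz : ℂ}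
    (h1 : V 1 = 1) (hX : V σX = μx • σX) (hY : V σY = μy • σY) (hZ : V σZ = μz • σZ) (A : Mat 2) :
    V A = (1/2 : ℂ) • (A.trace • 1 + (μx * (σX * A).trace) • σX + (μy * (σY * A).trace) • σY
      + (μz * (σZ * A).trace) • σZ) := by
  conv_lhs => rw [pauli_decomposition A]
  simp only [hV.map_smul, hV.map_add, h1, hX, hY, hZ, smul_smul, mul_comm]

theorem choi_eq_pauliChoi {V : Mat 2 → Mat 2} (hV : IsLinearMap ℂ V) {μx μy μz : ℂ}
    (h1 : V 1 = 1) (hX : V σX = μx • σX) (hY : V σY = μy • σY) (hZ : V σZ = μz • σZ) :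
    choi V = pauliChoi μx μy μz := by
  ext ⟨a, b⟩ ⟨c, d⟩
  simp only [choi, hV.apply_eq_of_pauli h1 hX hY hZ, pauliChoi]
  fin_cases a <;> fin_cases b <;> fin_cases c <;> fin_cases d <;>
    simp [σX, σY, σZ, Matrix.trace_fin_two, Matrix.vecMul, dotProduct, Matrix.single_apply,
      Matrix.one_fin_two] <;>
    ring_nf <;> simp only [Complex.I_sq] <;> ring

def singlet : Fin 2 × Fin 2 → ℂ := fun p => !![0, 1; -1, 0] p.1 p.2

theorem singlet_ne_zero : singlet ≠ 0 := fun h => by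
  simpa [singlet] using congrFun h (0, 1)

theorem pauliChoi_mulVec_singlet (μx μy μz : ℂ) :
    pauliChoi μx μy μz *ᵥ singlet = ((1 - μx + μy - μz) / 4) • singlet := by
  ext ⟨a, b⟩
  fin_cases a <;> fin_cases b <;>
    simp [pauliChoi, singlet, Matrix.mulVec, dotProduct, Fintype.sum_prod_type, σX, σY, σZ,
      Matrix.one_fin_two] <;> ring_nf

theorem eq_of_pauliChoi_mulVec_eq_smul {μx μy μz μ : ℂ} {w : Fin 2 × Fin 2 → ℂ} (hw0 : w ≠ 0)
    (hw : pauliChoi μx μy μz *ᵥ w = μ • w) :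
    μ = (1 + μx + μy + μz) / 4 ∨ μ = (1 - μx - μy + μz) / 4 ∨
      μ = (1 + μx - μy - μz) / 4 ∨ μ = (1 - μx + μy - μz) / 4 := by
  have e00 := congrFun hw (0, 0)
  have e01 := congrFun hw (0, 1)
  have e10 := congrFun hw (1, 0)
  have e11 := congrFun hw (1, 1)
  simp only [mulVec, dotProduct, pauliChoi, one_div, one_fin_two, σX, σY, σZ, Fin.isValue,
    Matrix.smul_apply, Matrix.add_apply, Matrix.sub_apply, kroneckerMap_apply, of_apply, cons_val',
    cons_val_fin_one, cons_val_zero, smul_eq_mul, Fintype.sum_prod_type, Fin.sum_univ_two, mul_one,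
    mul_zero, add_zero, sub_zero, cons_val_one, zero_add, mul_neg, sub_neg_eq_add, zero_mul, neg_mul,
    I_mul_I, neg_neg, Pi.smul_apply, sub_self, neg_zero] at e00 e01 e10 e11
  have hs : ((1 + μx + μy + μz) / 4 - μ) * (w (0, 0) + w (1, 1)) = 0 := by
    linear_combination e00 + e11
  have hd : ((1 - μx - μy + μz) / 4 - μ) * (w (0, 0) - w (1, 1)) = 0 := by
    linear_combination e00 - e11
  have hs' : ((1 + μx - μy - μz) / 4 - μ) * (w (0, 1) + w (1, 0)) = 0 := by
    linear_combination e01 + e10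
  have hd' : ((1 - μx + μy - μz) / 4 - μ) * (w (0, 1) - w (1, 0)) = 0 := by
    linear_combination e01 - e10
  by_contra! hμ
  obtain ⟨h1, h2, h3, h4⟩ := hμ
  simp only [mul_eq_zero, sub_eq_zero, h1.symm, h2.symm, h3.symm, h4.symm, false_or] at hs hd hs' hd'
  have w00 : w (0, 0) = 0 := by linear_combination (hs + hd) / 2
  have w01 : w (0, 1) = 0 := by linear_combination (hs' + hd') / 2
  have w10 : w (1, 0) = 0 := by linear_combination (hs' - hd') / 2
  have w11 : w (1, 1) = 0 := by linear_combination (hs - hd) / 2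
  exact hw0 (funext fun p => by fin_cases p <;> assumption)

section CollisionChannels
variable (ε : ℝ)

theorem Lam1_eq_pauliMap : Lam1 ε = pauliMap (1 - 2*ε) ε 0 ε := by
  ext ρ : 1
  simp only [Lam1, pauliMap, Complex.ofReal_zero, zero_smul, add_zero, smul_add]
  abel

theorem Lam2_eq_pauliMap :
    Lam2 ε = pauliMap ((1 - 2*ε)^2 + 4*ε^2) (2*ε*(1 - 2*ε)) 0 (2*ε*(1 - 2*ε)) := by
  ext ρ : 1
  simp only [Lam2, pauliMap, Complex.ofReal_zero, zero_smul, add_zero, smul_add]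
  abel

theorem Lam1_one : Lam1 ε 1 = 1 := by
  rw [Lam1_eq_pauliMap, pauliMap_one]; ring_nf; simp

theorem Lam1_σX : Lam1 ε σX = ((1 - 2*ε : ℝ) : ℂ) • σX := by
  rw [Lam1_eq_pauliMap, pauliMap_σX]; ring_nf

theorem Lam1_σY : Lam1 ε σY = ((1 - 4*ε : ℝ) : ℂ) • σY := by
  rw [Lam1_eq_pauliMap, pauliMap_σY]; ring_nf

theorem Lam1_σZ : Lam1 ε σZ = ((1 - 2*ε : ℝ) : ℂ) • σZ := by
  rw [Lam1_eq_pauliMap, pauliMap_σZ]; ring_nf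

theorem Lam2_one : Lam2 ε 1 = 1 := by
  rw [Lam2_eq_pauliMap, pauliMap_one]; ring_nf; simp

theorem Lam2_σX : Lam2 ε σX = ((1 - 4*ε + 8*ε^2 : ℝ) : ℂ) • σX := by
  rw [Lam2_eq_pauliMap, pauliMap_σX]; ring_nf

theorem Lam2_σY : Lam2 ε σY = (((1 - 4*ε)^2 : ℝ) : ℂ) • σY := by
  rw [Lam2_eq_pauliMap, pauliMap_σY]; ring_nf

theorem Lam2_σZ : Lam2 ε σZ = ((1 - 4*ε + 8*ε^2 : ℝ) : ℂ) • σZ := by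
  rw [Lam2_eq_pauliMap, pauliMap_σZ]; ring_nf

end CollisionChannels

theorem one_sub_two_mul_lt_div {ε : ℝ} (h0 : 0 < ε) (h : ε < 1/2) :
    1 - 2*ε < (1 - 4*ε + 8*ε^2) / (1 - 2*ε) := by
  rw [lt_div_iff₀ (by linarith)]
  nlinarith

/-- for `0 < ε < 1/4`, the intermediate map `V₂₁` (any linear map with
`Λ₂ = V₂₁ ∘ Λ₁`) has Pauli eigenvalues `μ_x = μ_z = (1−4ε+8ε²)/(1−2ε)` and `μ_y = 1−4ε`,
and the smallest eigenvalue of its Choi matrix is `ζ(ε) = (1 − 2μ_x + μ_y)/4 < 0`. -/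
theorem intermediate_map_choi_negative_eigenvalue (ε : ℝ) (h1 : 0 < ε) (h2 : ε < 1/4)
    (V : Mat 2 → Mat 2) (hlin : IsLinearMap ℂ V)
    (hV : ∀ ρ : Mat 2, Lam2 ε ρ = V (Lam1 ε ρ)) :
    V σX = (((1 - 4*ε + 8*ε^2)/(1 - 2*ε) : ℝ) : ℂ) • σX ∧
    V σY = ((1 - 4*ε : ℝ) : ℂ) • σY ∧
    V σZ = (((1 - 4*ε + 8*ε^2)/(1 - 2*ε) : ℝ) : ℂ) • σZ ∧
    (∃ v : Fin 2 × Fin 2 → ℂ, v ≠ 0 ∧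
      (choi V) *ᵥ v =
        (((1 - 2*((1 - 4*ε + 8*ε^2)/(1 - 2*ε)) + (1 - 4*ε))/4 : ℝ) : ℂ) • v) ∧
    (∀ μ : ℝ, (∃ w : Fin 2 × Fin 2 → ℂ, w ≠ 0 ∧ (choi V) *ᵥ w = (μ : ℂ) • w) →
      ((1 - 2*((1 - 4*ε + 8*ε^2)/(1 - 2*ε)) + (1 - 4*ε))/4 : ℝ) ≤ μ) ∧
    ((1 - 2*((1 - 4*ε + 8*ε^2)/(1 - 2*ε)) + (1 - 4*ε))/4 : ℝ) < 0 := by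
  have hm := one_sub_two_mul_lt_div h1 (by linarith)
  set m := (1 - 4*ε + 8*ε^2) / (1 - 2*ε)
  have hc₁ : ((1 - 2*ε : ℝ) : ℂ) ≠ 0 := Complex.ofReal_ne_zero.2 (by linarith)
  have hc₂ : ((1 - 4*ε : ℝ) : ℂ) ≠ 0 := Complex.ofReal_ne_zero.2 (by linarith)
  have hX : V σX = (m : ℂ) • σX := by
    rw [Complex.ofReal_div]
    exact hlin.apply_eq_div_smul_of_comp hV hc₁ (Lam1_σX ε) (Lam2_σX ε)
  have hY : V σY = ((1 - 4*ε : ℝ) : ℂ) • σY := by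
    rw [← mul_self_div_self (1 - 4*ε), ← sq, Complex.ofReal_div]
    exact hlin.apply_eq_div_smul_of_comp hV hc₂ (Lam1_σY ε) (Lam2_σY ε)
  have hZ : V σZ = (m : ℂ) • σZ := by
    rw [Complex.ofReal_div]
    exact hlin.apply_eq_div_smul_of_comp hV hc₁ (Lam1_σZ ε) (Lam2_σZ ε)
  have hOne : V 1 = 1 := by simpa only [Lam1_one, Lam2_one] using (hV 1).symm
  have hChoi := choi_eq_pauliChoi hlin hOne hX hY hZ
  refine ⟨hX, hY, hZ, ⟨singlet, singlet_ne_zero, ?_⟩, fun μ ⟨w, hw0, hw⟩ => ?_, by linarith⟩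
  · rw [hChoi, pauliChoi_mulVec_singlet]
    push_cast
    ring_nf
  · rw [hChoi] at hw
    rcases eq_of_pauliChoi_mulVec_eq_smul hw0 hw with h | h | h | h <;>
      norm_cast at h <;> linarith
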